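/- arXiv:1704.00472 — 7 statements merged into one kernel-verified Lean document; each statement's English description precedes it below -/
import Mathlib

section
/- Positivity is preserved: let φ : ℝ → ℝ be locally Lipschitz with φ(0) = 0 and φ(x) ≥ 0 for all x ≥ 0, let N ≥ 1, and let u : [0,T) → ℝ^{N+1} be a solution of the grid system u'(t) = Δ_N(φ∘u(t)) with u_i(0) ≥ 0 for all 0 ≤ i ≤ N. Then u_i(t) ≥ 0 for every t ∈ [0,T) and every 0 ≤ i ≤ N. -/
/-!
Positivity is controlled by the energy `ψ(t) = ∑ᵢ (min (uᵢ t) 0)²` of the negative parts, which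
vanishes at `t = 0`. On a compact time interval `u` is bounded, so `φ` is Lipschitz on its range
and `|φ x| ≤ L |x|` there because `φ 0 = 0`. A negative `uᵢ` is pulled down by `φ (uⱼ)` only if
`uⱼ` is negative too (`φ ≥ 0` on `[0, ∞)`), which gives `ψ' ≤ K ψ`; Gronwall forces `ψ ≡ 0`.
-/

/-- The discrete Neumann Laplacian on `{0,…,N}` with mesh `ε = 1/N`:
`(Δ_N w)_i = (w_{i+1} − 2w_i + w_{i−1})/ε²` for `0 < i < N`,
`(Δ_N w)_0 = (w_1 − w_0)/ε²`, `(Δ_N w)_N = (w_{N−1} − w_N)/ε²`. -/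
noncomputable def lapN (N : ℕ) (w : Fin (N + 1) → ℝ) (i : Fin (N + 1)) : ℝ :=
  if i.val = 0 then
    (N : ℝ) ^ 2 * (w ⟨min 1 N, by omega⟩ - w ⟨0, by omega⟩)
  else if h : i.val = N then
    (N : ℝ) ^ 2 * (w ⟨N - 1, by omega⟩ - w ⟨N, by omega⟩)
  else
    (N : ℝ) ^ 2 *
      (w ⟨i.val + 1, by have := i.isLt; omega⟩ - 2 * w i + w ⟨i.val - 1, by omega⟩)

open Set Topology

theorem nonpos_of_deriv_right_le_mul {f f' : ℝ → ℝ} {K a b : ℝ}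
    (hf : ContinuousOn f (Icc a b))
    (hf' : ∀ x ∈ Ico a b, HasDerivWithinAt f (f' x) (Ici x) x) (ha : f a ≤ 0)
    (bound : ∀ x ∈ Ico a b, f' x ≤ K * f x) : ∀ x ∈ Icc a b, f x ≤ 0 := by
  intro x hx
  have := le_gronwallBound_of_liminf_deriv_right_le hf
    (fun x hx _ hr => (hf' x hx).liminf_right_slope_le hr) ha
    (fun x hx => (add_zero (K * f x)).symm ▸ bound x hx) x hx
  rwa [gronwallBound_ε0_δ0] at this

theorem LocallyLipschitz.exists_abs_le_mul_abs {φ : ℝ → ℝ} (hφ : LocallyLipschitz φ)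
    (hφ0 : φ 0 = 0) (M : ℝ) : ∃ L, 0 ≤ L ∧ ∀ x, |x| ≤ M → |φ x| ≤ L * |x| := by
  obtain ⟨K, hK⟩ := hφ.locallyLipschitzOn.exists_lipschitzOnWith_of_compact
    (isCompact_Icc (a := -M) (b := M))
  refine ⟨K, K.coe_nonneg, fun x hx => ?_⟩
  have h0 : (0 : ℝ) ∈ Icc (-M) M := ⟨by linarith [abs_nonneg x], by linarith [abs_nonneg x]⟩
  simpa [Real.dist_eq, hφ0] using hK.dist_le_mul x (abs_le.1 hx) 0 h0

theorem hasDerivAt_min_zero_sq (x : ℝ) :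
    HasDerivAt (fun y : ℝ => min y 0 ^ 2) (2 * min x 0) x := by
  refine hasDerivAt_of_hasDerivAt_of_ne' (f := fun y : ℝ => min y 0 ^ 2)
    (g := fun y => 2 * min y 0) (x := 0) (fun y hy => ?_) (by fun_prop) (by fun_prop) x
  rcases hy.lt_or_gt with hy | hy
  · have h : (fun z : ℝ => min z 0 ^ 2) =ᶠ[𝓝 y] fun z => z ^ 2 := by
      filter_upwards [Iio_mem_nhds hy] with z hz
      rw [min_eq_left hz.le]
    simpa [min_eq_left hy.le] using (hasDerivAt_pow 2 y).congr_of_eventuallyEq h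
  · have h : (fun z : ℝ => min z 0 ^ 2) =ᶠ[𝓝 y] fun _ => 0 := by
      filter_upwards [Ioi_mem_nhds hy] with z hz
      simp [min_eq_right (mem_Ioi.1 hz).le]
    simpa [min_eq_right hy.le] using (hasDerivAt_const y (0 : ℝ)).congr_of_eventuallyEq h

theorem min_zero_mul_sub_le {φ : ℝ → ℝ} (hφpos : ∀ x, 0 ≤ x → 0 ≤ φ x) {L x y : ℝ}
    (hL : 0 ≤ L) (hx : |φ x| ≤ L * |x|) (hy : |φ y| ≤ L * |y|) :
    min x 0 * (φ y - φ x) ≤ 2 * L * (min x 0 ^ 2 + min y 0 ^ 2) := by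
  rcases le_total 0 x with hx0 | hx0
  · rw [min_eq_right hx0, zero_mul]
    positivity
  rw [min_eq_left hx0]
  have hxx : -(x * φ x) ≤ L * x ^ 2 := by
    calc -(x * φ x) ≤ |x| * |φ x| := by rw [← abs_mul]; exact neg_le_abs _
      _ ≤ |x| * (L * |x|) := mul_le_mul_of_nonneg_left hx (abs_nonneg x)
      _ = L * x ^ 2 := by rw [← sq_abs x]; ring
  have hxy : x * φ y ≤ L * (x ^ 2 + min y 0 ^ 2) := by
    rcases le_total 0 y with hy0 | hy0
    · nlinarith [hφpos y hy0, mul_nonneg hL (add_nonneg (sq_nonneg x) (sq_nonneg (min y 0)))]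
    rw [min_eq_left hy0]
    calc x * φ y ≤ |x| * |φ y| := by rw [← abs_mul]; exact le_abs_self _
      _ ≤ |x| * (L * |y|) := mul_le_mul_of_nonneg_left hy (abs_nonneg x)
      _ ≤ L * (x ^ 2 + y ^ 2) := by
        nlinarith [two_mul_le_add_sq |x| |y|, sq_abs x, sq_abs y]
  nlinarith [mul_nonneg hL (sq_nonneg (min y 0))]

section negPartEnergy

variable {ι : Type*} [Fintype ι]

def negPartEnergy (v : ι → ℝ) : ℝ :=
  ∑ i, min (v i) 0 ^ 2

theorem sq_min_zero_le_negPartEnergy (v : ι → ℝ) (i : ι) :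
    min (v i) 0 ^ 2 ≤ negPartEnergy v :=
  Finset.single_le_sum (fun j _ => sq_nonneg (min (v j) 0)) (Finset.mem_univ i)

theorem negPartEnergy_nonpos_iff {v : ι → ℝ} : negPartEnergy v ≤ 0 ↔ ∀ i, 0 ≤ v i := by
  refine ⟨fun h i => ?_, fun h => Finset.sum_nonpos fun i _ => ?_⟩
  · have hsq : min (v i) 0 ^ 2 = 0 :=
      le_antisymm ((sq_min_zero_le_negPartEnergy v i).trans h) (sq_nonneg _)
    exact min_eq_right_iff.1 (pow_eq_zero_iff two_ne_zero |>.1 hsq)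
  · rw [min_eq_right (h i)]
    norm_num

theorem continuous_negPartEnergy : Continuous (negPartEnergy : (ι → ℝ) → ℝ) := by
  unfold negPartEnergy
  fun_prop

theorem HasDerivWithinAt.negPartEnergy {u : ℝ → ι → ℝ} {u' : ι → ℝ} {s : Set ℝ} {t : ℝ}
    (h : HasDerivWithinAt u u' s t) :
    HasDerivWithinAt (fun τ => negPartEnergy (u τ)) (∑ i, 2 * min (u t i) 0 * u' i) s t :=
  HasDerivWithinAt.fun_sum fun i _ =>
    (hasDerivAt_min_zero_sq (u t i)).comp_hasDerivWithinAt (h := fun τ => u τ i) t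
      (hasDerivWithinAt_pi.1 h i)

end negPartEnergy

-- At the two ends the second neighbour is `i` itself (Neumann condition).
theorem lapN_eq_neighbours (N : ℕ) (w : Fin (N + 1) → ℝ) (i : Fin (N + 1)) :
    ∃ j k, lapN N w i = (N : ℝ) ^ 2 * ((w j - w i) + (w k - w i)) := by
  unfold lapN
  split_ifs with h0 hN
  · refine ⟨⟨min 1 N, by omega⟩, i, ?_⟩
    simp only [show i = ⟨0, by omega⟩ from Fin.ext h0]
    ring
  · refine ⟨⟨N - 1, by omega⟩, i, ?_⟩
    simp only [show i = ⟨N, by omega⟩ from Fin.ext hN]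
    ring
  · exact ⟨⟨i.val + 1, by omega⟩, ⟨i.val - 1, by omega⟩, by ring⟩

theorem sum_min_zero_mul_lapN_le {φ : ℝ → ℝ} (hφpos : ∀ x, 0 ≤ x → 0 ≤ φ x) {N : ℕ}
    {v : Fin (N + 1) → ℝ} {L : ℝ} (hL : 0 ≤ L) (hv : ∀ j, |φ (v j)| ≤ L * |v j|) :
    ∑ i, 2 * min (v i) 0 * lapN N (fun j => φ (v j)) i
      ≤ (N + 1) * (16 * N ^ 2 * L) * negPartEnergy v := by
  have hterm : ∀ i, 2 * min (v i) 0 * lapN N (fun j => φ (v j)) i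
      ≤ 16 * N ^ 2 * L * negPartEnergy v := by
    intro i
    obtain ⟨j, k, hjk⟩ := lapN_eq_neighbours N (fun j => φ (v j)) i
    have hi := sq_min_zero_le_negPartEnergy v i
    have hj := sq_min_zero_le_negPartEnergy v j
    have hk := sq_min_zero_le_negPartEnergy v k
    have hNL : 0 ≤ (N : ℝ) ^ 2 * L := by positivity
    rw [hjk]
    calc _ = 2 * N ^ 2 * (min (v i) 0 * (φ (v j) - φ (v i))
          + min (v i) 0 * (φ (v k) - φ (v i))) := by ring
      _ ≤ 2 * N ^ 2 * (2 * L * (min (v i) 0 ^ 2 + min (v j) 0 ^ 2)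
          + 2 * L * (min (v i) 0 ^ 2 + min (v k) 0 ^ 2)) :=
        mul_le_mul_of_nonneg_left (add_le_add (min_zero_mul_sub_le hφpos hL (hv i) (hv j))
          (min_zero_mul_sub_le hφpos hL (hv i) (hv k))) (by positivity)
      _ ≤ 16 * N ^ 2 * L * negPartEnergy v := by nlinarith
  calc _ ≤ ∑ _i : Fin (N + 1), 16 * N ^ 2 * L * negPartEnergy v :=
        Finset.sum_le_sum fun i _ => hterm i
    _ = _ := by
      simp only [Finset.sum_const, Finset.card_univ, Fintype.card_fin, nsmul_eq_mul]
      push_cast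
      ring

theorem stmt6_general (φ : ℝ → ℝ) (hφ : LocallyLipschitz φ) (hφ0 : φ 0 = 0)
    (hφpos : ∀ x : ℝ, 0 ≤ x → 0 ≤ φ x) (N : ℕ) (T : ℝ)
    (u : ℝ → Fin (N + 1) → ℝ)
    (hu : ∀ t ∈ Set.Ico (0 : ℝ) T,
      HasDerivWithinAt u (lapN N fun i => φ (u t i)) (Set.Ico 0 T) t)
    (h0 : ∀ i, 0 ≤ u 0 i) :
    ∀ t ∈ Set.Ico (0 : ℝ) T, ∀ i, 0 ≤ u t i := by
  rintro t ⟨ht0, htT⟩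
  have hsub : Icc 0 t ⊆ Ico 0 T := Icc_subset_Ico_right htT
  have hcont : ContinuousOn u (Icc 0 t) := fun s hs =>
    (hu s (hsub hs)).continuousWithinAt.mono hsub
  obtain ⟨M, hM⟩ := isCompact_Icc.exists_bound_of_continuousOn hcont
  obtain ⟨L, hL, hφL⟩ := hφ.exists_abs_le_mul_abs hφ0 M
  have hderiv : ∀ s ∈ Ico 0 t, HasDerivWithinAt (fun τ => negPartEnergy (u τ))
      (∑ i, 2 * min (u s i) 0 * lapN N (fun j => φ (u s j)) i) (Ici s) s := fun s hs =>
    (hu s (hsub (Ico_subset_Icc_self hs))).negPartEnergy.mono_of_mem_nhdsWithin <|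
      Filter.mem_of_superset (Ico_mem_nhdsGE (hs.2.trans htT)) (Ico_subset_Ico_left hs.1)
  have hbound : ∀ s ∈ Ico 0 t, ∑ i, 2 * min (u s i) 0 * lapN N (fun j => φ (u s j)) i
      ≤ (N + 1) * (16 * N ^ 2 * L) * negPartEnergy (u s) := fun s hs =>
    sum_min_zero_mul_lapN_le hφpos hL fun j => hφL _ <| by
      simpa using (norm_le_pi_norm (u s) j).trans (hM s (Ico_subset_Icc_self hs))
  exact negPartEnergy_nonpos_iff.1 <| nonpos_of_deriv_right_le_mul
    (continuous_negPartEnergy.comp_continuousOn hcont) hderiv (negPartEnergy_nonpos_iff.2 h0)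
    hbound t ⟨ht0, le_rfl⟩

/-- positivity is preserved by the grid system `u' = Δ_N(φ∘u)` on
`[0,T)` when `φ` is locally Lipschitz, `φ(0) = 0` and `φ ≥ 0` on `[0,∞)`. -/
theorem stmt6 (φ : ℝ → ℝ) (hφ : LocallyLipschitz φ) (hφ0 : φ 0 = 0)
    (hφpos : ∀ x : ℝ, 0 ≤ x → 0 ≤ φ x) (N : ℕ) (hN : 1 ≤ N) (T : ℝ)
    (u : ℝ → Fin (N + 1) → ℝ)
    (hu : ∀ t ∈ Set.Ico (0 : ℝ) T,
      HasDerivWithinAt u (lapN N fun i => φ (u t i)) (Set.Ico 0 T) t)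
    (h0 : ∀ i, 0 ≤ u 0 i) :
    ∀ t ∈ Set.Ico (0 : ℝ) T, ∀ i, 0 ≤ u t i :=
  stmt6_general φ hφ hφ0 hφpos N T u hu h0
end

section
/- Global existence in time: let M > 0 and let φ : ℝ → ℝ be locally Lipschitz with φ(0) = 0, φ(y) ≥ 0 for all y ∈ [0,M], and φ(M) ≥ φ(y) for all y ∈ [0,M]. Let N ≥ 1 and let u₀ : {0,…,N} → ℝ satisfy 0 ≤ (u₀)_i ≤ M for all i. Then there exists a unique differentiable u : [0,∞) → ℝ^{N+1} with u(0) = u₀ and u'(t) = Δ_N(φ∘u(t)) for all t ≥ 0. -/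
/-!
Outside `[0, M]` replace `φ` by its constant extension `ψ`. Then `x ↦ Δ_N(ψ ∘ x)` is globally
Lipschitz and bounded, so Picard–Lindelöf on the intervals `[0, n + 1]`, glued by uniqueness,
gives a global solution of the truncated system. The discrete maximum principle (`Δ_N w ≤ 0` at
a node where `w` is maximal) keeps it in the box: where the largest coordinate is `≥ M`, `ψ` takes
its maximum `φ M` there, so that coordinate cannot increase; symmetrically at `0`, where
`ψ = φ 0 = 0` is its minimum. Inside the box `ψ = φ`, so this solves the original system, and
uniqueness holds because `x ↦ Δ_N(φ ∘ x)` is locally Lipschitz.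
-/

open Set Filter Metric Topology
open scoped NNReal

section Laplacian

variable {N : ℕ}

lemma lapN_sub (w w' : Fin (N + 1) → ℝ) : lapN N (w - w') = lapN N w - lapN N w' := by
  funext i
  simp only [lapN, Pi.sub_apply]
  split_ifs <;> ring

lemma lapN_neg (w : Fin (N + 1) → ℝ) : lapN N (-w) = -lapN N w := by
  funext i
  simp only [lapN, Pi.neg_apply]
  split_ifs <;> ring

lemma norm_lapN_le (w : Fin (N + 1) → ℝ) : ‖lapN N w‖ ≤ 4 * N ^ 2 * ‖w‖ := by
  refine (pi_norm_le_iff_of_nonneg (by positivity)).2 fun i => ?_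
  have hw : ∀ j, |w j| ≤ ‖w‖ := norm_le_pi_norm w
  have hN : (0 : ℝ) ≤ N ^ 2 := by positivity
  rw [Real.norm_eq_abs]
  refine le_of_le_of_eq (b := N ^ 2 * (4 * ‖w‖)) ?_ (by ring)
  have hb : ∀ j, -‖w‖ ≤ w j ∧ w j ≤ ‖w‖ := fun j => abs_le.1 (hw j)
  unfold lapN
  split_ifs <;> rw [abs_mul, abs_of_nonneg hN] <;> gcongr <;> rw [abs_le]
  · constructor <;> linarith [hb ⟨min 1 N, by omega⟩, hb ⟨0, by omega⟩]
  · constructor <;> linarith [hb ⟨N - 1, by omega⟩, hb ⟨N, by omega⟩]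
  · constructor <;> linarith [hb ⟨i.val + 1, by omega⟩, hb i, hb ⟨i.val - 1, by omega⟩]

lemma lapN_nonpos_of_forall_le {w : Fin (N + 1) → ℝ} {i : Fin (N + 1)} (h : ∀ j, w j ≤ w i) :
    lapN N w i ≤ 0 := by
  have hN : (0 : ℝ) ≤ N ^ 2 := by positivity
  unfold lapN
  split_ifs with h0 hN'
  · rw [show (⟨0, _⟩ : Fin (N + 1)) = i from Fin.ext h0.symm]
    nlinarith [h ⟨min 1 N, by omega⟩]
  · rw [show (⟨N, _⟩ : Fin (N + 1)) = i from Fin.ext hN'.symm]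
    nlinarith [h ⟨N - 1, by omega⟩]
  · nlinarith [h ⟨i.val + 1, by omega⟩, h ⟨i.val - 1, by omega⟩]

lemma lipschitzOnWith_lapN_comp {K : ℝ≥0} {g : ℝ → ℝ} {s : Set ℝ}
    (hg : LipschitzOnWith K g s) :
    LipschitzOnWith (4 * N ^ 2 * K) (fun x => lapN N fun i => g (x i))
      (univ.pi fun _ => s) := by
  refine LipschitzOnWith.of_dist_le_mul fun x hx y hy => ?_
  have hcoord : ‖(fun i => g (x i)) - fun i => g (y i)‖ ≤ K * dist x y := by
    refine (pi_norm_le_iff_of_nonneg (by positivity)).2 fun i => ?_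
    calc ‖g (x i) - g (y i)‖ ≤ K * dist (x i) (y i) :=
          hg.dist_le_mul _ (hx i trivial) _ (hy i trivial)
      _ ≤ K * dist x y := by gcongr; exact dist_le_pi_dist x y i
  rw [dist_eq_norm, ← lapN_sub]
  calc _ ≤ 4 * N ^ 2 * ‖(fun i => g (x i)) - fun i => g (y i)‖ := norm_lapN_le _
    _ ≤ 4 * N ^ 2 * (K * dist x y) := by gcongr
    _ = _ := by push_cast; ring

lemma locallyLipschitz_lapN_comp {g : ℝ → ℝ} (hg : LocallyLipschitz g) :
    LocallyLipschitz fun x : Fin (N + 1) → ℝ => lapN N fun i => g (x i) := by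
  intro x
  obtain ⟨K, hK⟩ := hg.locallyLipschitzOn.exists_lipschitzOnWith_of_compact
    (isCompact_Icc (a := -(‖x‖ + 1)) (b := ‖x‖ + 1))
  refine ⟨_, ball x 1, ball_mem_nhds x one_pos, (lipschitzOnWith_lapN_comp hK).mono ?_⟩
  intro y hy i _
  have hyi : |y i| ≤ ‖x‖ + 1 := (norm_le_pi_norm y i).trans <| by
    have := norm_le_norm_add_norm_sub' y x
    rw [mem_ball, dist_eq_norm] at hy
    linarith
  exact abs_le.1 hyi

end Laplacian

section ODE

variable {E : Type*} [NormedAddCommGroup E] [NormedSpace ℝ E]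

theorem eqOn_Icc_of_hasDerivWithinAt {F : E → E} (hF : LocallyLipschitz F) {u v : ℝ → E}
    {a b : ℝ} (hu : ∀ t ∈ Icc a b, HasDerivWithinAt u (F (u t)) (Icc a b) t)
    (hv : ∀ t ∈ Icc a b, HasDerivWithinAt v (F (v t)) (Icc a b) t) (ha : u a = v a) :
    EqOn u v (Icc a b) := by
  have hcu : ContinuousOn u (Icc a b) := fun t ht => (hu t ht).continuousWithinAt
  have hcv : ContinuousOn v (Icc a b) := fun t ht => (hv t ht).continuousWithinAt
  set s := u '' Icc a b ∪ v '' Icc a b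
  obtain ⟨K, hK⟩ := hF.locallyLipschitzOn.exists_lipschitzOnWith_of_compact
    ((isCompact_Icc.image_of_continuousOn hcu).union (isCompact_Icc.image_of_continuousOn hcv))
    (s := s)
  have right_deriv : ∀ {w : ℝ → E}, (∀ t ∈ Icc a b, HasDerivWithinAt w (F (w t)) (Icc a b) t) →
      ∀ t ∈ Ico a b, HasDerivWithinAt w (F (w t)) (Ici t) t := fun hw t ht =>
    (hw t (Ico_subset_Icc_self ht)).mono_of_mem_nhdsWithin <|
      mem_of_superset (Icc_mem_nhdsGE_of_mem ⟨le_rfl, ht.2⟩) (Icc_subset_Icc_left ht.1)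
  exact ODE_solution_unique_of_mem_Icc_right (v := fun _ => F) (s := fun _ => s)
    (fun _ _ => hK) hcu (right_deriv hu)
    (fun _ ht => Or.inl (mem_image_of_mem u (Ico_subset_Icc_self ht))) hcv (right_deriv hv)
    (fun _ ht => Or.inr (mem_image_of_mem v (Ico_subset_Icc_self ht))) ha

theorem eqOn_Ici_of_hasDerivWithinAt {F : E → E} (hF : LocallyLipschitz F) {u v : ℝ → E}
    {a : ℝ} (hu : ∀ t ∈ Ici a, HasDerivWithinAt u (F (u t)) (Ici a) t)
    (hv : ∀ t ∈ Ici a, HasDerivWithinAt v (F (v t)) (Ici a) t) (ha : u a = v a) :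
    EqOn u v (Ici a) := fun _ ht =>
  eqOn_Icc_of_hasDerivWithinAt hF (fun s hs => (hu s hs.1).mono Icc_subset_Ici_self)
    (fun s hs => (hv s hs.1).mono Icc_subset_Ici_self) ha ⟨ht, le_rfl⟩

variable [CompleteSpace E]

theorem exists_hasDerivWithinAt_Icc_of_lipschitzWith {F : E → E} {K : ℝ≥0} {C : ℝ}
    (hF : LipschitzWith K F) (hC : ∀ x, ‖F x‖ ≤ C) (x₀ : E) {T : ℝ} (hT : 0 ≤ T) :
    ∃ u : ℝ → E, u 0 = x₀ ∧ ∀ t ∈ Icc 0 T, HasDerivWithinAt u (F (u t)) (Icc 0 T) t := by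
  have hpl : IsPicardLindelof (fun _ => F) (tmin := 0) (tmax := T) ⟨0, le_rfl, hT⟩ x₀
      (C.toNNReal * T.toNNReal) 0 C.toNNReal K :=
    IsPicardLindelof.of_time_independent (fun x _ => (hC x).trans (Real.le_coe_toNNReal C))
      hF.lipschitzOnWith <| by simp [max_eq_left hT, Real.coe_toNNReal _ hT]
  exact hpl.exists_eq_forall_mem_Icc_hasDerivWithinAt₀

theorem exists_hasDerivWithinAt_Ici_of_lipschitzWith {F : E → E} {K : ℝ≥0} {C : ℝ}
    (hF : LipschitzWith K F) (hC : ∀ x, ‖F x‖ ≤ C) (x₀ : E) :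
    ∃ u : ℝ → E, u 0 = x₀ ∧ ∀ t ∈ Ici 0, HasDerivWithinAt u (F (u t)) (Ici 0) t := by
  choose sol hsol₀ hsol using fun n : ℕ =>
    exists_hasDerivWithinAt_Icc_of_lipschitzWith hF hC x₀ (T := n + 1) (by positivity)
  have agree : ∀ m n : ℕ, ∀ t ∈ Icc (0 : ℝ) (min (m + 1) (n + 1)), sol m t = sol n t :=
    fun m n => eqOn_Icc_of_hasDerivWithinAt hF.locallyLipschitz
      (fun t ht => (hsol m t ⟨ht.1, ht.2.trans (min_le_left _ _)⟩).mono
        (Icc_subset_Icc_right (min_le_left _ _)))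
      (fun t ht => (hsol n t ⟨ht.1, ht.2.trans (min_le_right _ _)⟩).mono
        (Icc_subset_Icc_right (min_le_right _ _)))
      ((hsol₀ m).trans (hsol₀ n).symm)
  refine ⟨fun t => sol ⌈t⌉₊ t, ?_, fun t ht => ?_⟩
  · simpa using hsol₀ 0
  · have hu : ∀ s ∈ Icc (0 : ℝ) (⌈t⌉₊ + 1), sol ⌈s⌉₊ s = sol ⌈t⌉₊ s := fun s hs =>
      agree _ _ s ⟨hs.1, le_min (by linarith [Nat.le_ceil s]) hs.2⟩
    have hmem : Icc (0 : ℝ) (⌈t⌉₊ + 1) ∈ 𝓝[Ici 0] t :=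
      mem_nhdsWithin.2 ⟨Iio (⌈t⌉₊ + 1), isOpen_Iio, (Nat.le_ceil t).trans_lt (lt_add_one _),
        fun s hs => ⟨hs.2, hs.1.le⟩⟩
    have ht' : t ∈ Icc (0 : ℝ) (⌈t⌉₊ + 1) := ⟨ht, by linarith [Nat.le_ceil t]⟩
    exact ((hsol _ t ht').mono_of_mem_nhdsWithin hmem).congr_of_eventuallyEq
      (eventually_of_mem hmem hu) (hu t ht')

end ODE

section Comparison

lemma eventually_lt_add_mul_sub_of_hasDerivWithinAt {g : ℝ → ℝ} {g' x m r : ℝ}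
    (hg : HasDerivWithinAt g g' (Ici x) x) (hle : g x ≤ m) (hmax : g x = m → g' < r)
    (hr : 0 < r) : ∀ᶠ z in 𝓝[>] x, g z < m + r * (z - x) := by
  rcases hle.lt_or_eq with hlt | heq
  · filter_upwards [(hg.continuousWithinAt.mono Ioi_subset_Ici_self).eventually
      (gt_mem_nhds hlt), self_mem_nhdsWithin] with z hz hxz
    nlinarith [mem_Ioi.1 hxz]
  · have hslope := hg.limsup_slope_le (hmax heq)
    rw [Ici_sdiff_left] at hslope
    filter_upwards [hslope, self_mem_nhdsWithin] with z hz hxz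
    rw [slope_def_field, div_lt_iff₀ (sub_pos.2 hxz)] at hz
    linarith

theorem forall_le_of_hasDerivWithinAt_nonpos_of_isMax {ι : Type*} [Fintype ι] [Nonempty ι]
    {g g' : ι → ℝ → ℝ} {a b c : ℝ} (hg : ∀ j, ContinuousOn (g j) (Icc a b))
    (hg' : ∀ j, ∀ x ∈ Ico a b, HasDerivWithinAt (g j) (g' j x) (Ici x) x)
    (hmax : ∀ x ∈ Ico a b, ∀ j, (∀ k, g k x ≤ g j x) → c ≤ g j x → g' j x ≤ 0)
    (ha : ∀ j, g j a ≤ c) : ∀ x ∈ Icc a b, ∀ j, g j x ≤ c := by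
  -- `f` has lower right Dini derivative `≤ 0`: members attaining the maximum have `g' ≤ 0`,
  -- the others stay below it by continuity.
  set f : ℝ → ℝ := fun x => max c (Finset.univ.sup' Finset.univ_nonempty fun j => g j x)
  have hgf : ∀ x j, g j x ≤ f x := fun x j =>
    (Finset.le_sup' (fun j => g j x) (Finset.mem_univ j)).trans (le_max_right _ _)
  have hfc : ContinuousOn f (Icc a b) :=
    continuousOn_const.sup (ContinuousOn.finset_sup'_apply _ fun j _ => hg j)
  have hfa : f a ≤ c := max_le le_rfl (Finset.sup'_le _ _ fun j _ => ha j)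
  have bound : ∀ x ∈ Ico a b, ∀ r, 0 < r → ∃ᶠ z in 𝓝[>] x, slope f x z < r := by
    intro x hx r hr
    have hgj : ∀ j, ∀ᶠ z in 𝓝[>] x, g j z < f x + r * (z - x) := fun j =>
      eventually_lt_add_mul_sub_of_hasDerivWithinAt (hg' j x hx) (hgf x j) (fun heq =>
        (hmax x hx j (fun k => heq ▸ hgf x k) (heq ▸ le_max_left _ _)).trans_lt hr) hr
    refine Eventually.frequently ?_
    filter_upwards [eventually_all.2 hgj, self_mem_nhdsWithin] with z hz hxz
    have hxz : 0 < z - x := sub_pos.2 hxz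
    have hfz : f z < f x + r * (z - x) :=
      max_lt ((le_max_left _ _).trans_lt (lt_add_of_pos_right _ (mul_pos hr hxz)))
        ((Finset.sup'_lt_iff _).2 fun j _ => hz j)
    rw [slope_def_field, div_lt_iff₀ hxz]
    linarith
  have hfle := image_le_of_liminf_slope_right_le_deriv_boundary hfc hfa continuousOn_const
    (fun x _ => hasDerivWithinAt_const x _ c) bound
  exact fun x hx j => (hgf x j).trans (hfle hx)

end Comparison

section GridSystem

variable {N : ℕ} {ψ : ℝ → ℝ} {u : ℝ → Fin (N + 1) → ℝ} {a c : ℝ}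

theorem le_of_hasDerivWithinAt_lapN (hψ : ∀ y z, y ≤ z → c ≤ z → ψ y ≤ ψ z)
    (hu : ∀ t ∈ Ici a, HasDerivWithinAt u (lapN N fun i => ψ (u t i)) (Ici a) t)
    (ha : ∀ i, u a i ≤ c) : ∀ t ∈ Ici a, ∀ i, u t i ≤ c := by
  have hcoord : ∀ t ∈ Ici a, ∀ i,
      HasDerivWithinAt (u · i) (lapN N (fun k => ψ (u t k)) i) (Ici a) t :=
    fun t ht => hasDerivWithinAt_pi.1 (hu t ht)
  intro t ht
  refine forall_le_of_hasDerivWithinAt_nonpos_of_isMax (g := fun i s => u s i)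
    (fun i s hs => (hcoord s hs.1 i).continuousWithinAt.mono Icc_subset_Ici_self)
    (fun i s hs => (hcoord s hs.1 i).mono (Ici_subset_Ici.2 hs.1))
    (fun s _ i hmax hc => lapN_nonpos_of_forall_le fun k => hψ _ _ (hmax k) hc) ha t ⟨ht, le_rfl⟩

theorem ge_of_hasDerivWithinAt_lapN (hψ : ∀ y z, z ≤ y → z ≤ c → ψ z ≤ ψ y)
    (hu : ∀ t ∈ Ici a, HasDerivWithinAt u (lapN N fun i => ψ (u t i)) (Ici a) t)
    (ha : ∀ i, c ≤ u a i) : ∀ t ∈ Ici a, ∀ i, c ≤ u t i := by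
  have hneg := le_of_hasDerivWithinAt_lapN (ψ := fun y => -ψ (-y)) (u := -u) (c := -c)
    (fun y z hyz hcz => neg_le_neg (hψ _ _ (neg_le_neg hyz) (neg_le.1 hcz)))
    (fun t ht => by
      have hlap : (lapN N fun i => -ψ (-(-u) t i)) = -lapN N fun i => ψ (u t i) := by
        rw [← lapN_neg]; simp only [Pi.neg_apply, neg_neg]; rfl
      exact hlap ▸ (hu t ht).neg) (fun i => neg_le_neg (ha i))
  exact fun t ht i => neg_le_neg_iff.1 (hneg t ht i)

theorem exists_hasDerivWithinAt_lapN_comp {K : ℝ≥0} {C : ℝ} (hψ : LipschitzWith K ψ)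
    (hC : ∀ y, |ψ y| ≤ C) (u₀ : Fin (N + 1) → ℝ) :
    ∃ u : ℝ → Fin (N + 1) → ℝ, u 0 = u₀ ∧
      ∀ t ∈ Ici 0, HasDerivWithinAt u (lapN N fun i => ψ (u t i)) (Ici 0) t := by
  have hG_lip := lipschitzOnWith_lapN_comp (N := N) (hψ.lipschitzOnWith (s := univ))
  rw [pi_univ, lipschitzOnWith_univ] at hG_lip
  refine exists_hasDerivWithinAt_Ici_of_lipschitzWith hG_lip (C := 4 * N ^ 2 * C)
    (fun x => (norm_lapN_le _).trans ?_) u₀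
  gcongr
  exact (pi_norm_le_iff_of_nonneg ((abs_nonneg _).trans (hC 0))).2 fun i => hC (x i)

end GridSystem

theorem stmt8_general (M : ℝ) (hM : 0 < M) (φ : ℝ → ℝ) (hφ : LocallyLipschitz φ)
    (hφ0 : φ 0 = 0) (hφpos : ∀ y ∈ Set.Icc (0 : ℝ) M, 0 ≤ φ y)
    (hφmax : ∀ y ∈ Set.Icc (0 : ℝ) M, φ y ≤ φ M)
    (N : ℕ) (u₀ : Fin (N + 1) → ℝ)
    (h0 : ∀ i, 0 ≤ u₀ i ∧ u₀ i ≤ M) :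
    (∃ u : ℝ → Fin (N + 1) → ℝ, u 0 = u₀ ∧
      ∀ t ∈ Set.Ici (0 : ℝ),
        HasDerivWithinAt u (lapN N fun i => φ (u t i)) (Set.Ici 0) t) ∧
    ∀ u v : ℝ → Fin (N + 1) → ℝ,
      u 0 = u₀ →
      (∀ t ∈ Set.Ici (0 : ℝ),
        HasDerivWithinAt u (lapN N fun i => φ (u t i)) (Set.Ici 0) t) →
      v 0 = u₀ →
      (∀ t ∈ Set.Ici (0 : ℝ),
        HasDerivWithinAt v (lapN N fun i => φ (v t i)) (Set.Ici 0) t) →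
      ∀ t ∈ Set.Ici (0 : ℝ), u t = v t := by
  refine ⟨?_, fun u v hu₀ hu hv₀ hv => eqOn_Ici_of_hasDerivWithinAt
    (locallyLipschitz_lapN_comp hφ) hu hv (hu₀.trans hv₀.symm)⟩
  obtain ⟨K, hK⟩ := hφ.locallyLipschitzOn.exists_lipschitzOnWith_of_compact
    (isCompact_Icc (a := 0) (b := M))
  set ψ : ℝ → ℝ := IccExtend hM.le ((Icc 0 M).domRestrict φ)
  have hψ_eq : ∀ y ∈ Icc 0 M, ψ y = φ y := fun y hy => IccExtend_of_mem hM.le _ hy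
  have hψ_left : ∀ z ≤ 0, ψ z = 0 := fun z hz => (IccExtend_of_le_left hM.le _ hz).trans hφ0
  have hψ_right : ∀ z, M ≤ z → ψ z = φ M := fun z hz => IccExtend_of_right_le hM.le _ hz
  have hψ_mem : ∀ y, ψ y ∈ Icc 0 (φ M) := fun y =>
    ⟨hφpos _ (projIcc 0 M hM.le y).2, hφmax _ (projIcc 0 M hM.le y).2⟩
  have hψ_lip : LipschitzWith K ψ := by
    have := hK.to_restrict.comp (LipschitzWith.projIcc hM.le)
    rwa [mul_one] at this
  obtain ⟨u, hu₀, hu⟩ := exists_hasDerivWithinAt_lapN_comp (N := N) hψ_lip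
    (fun y => abs_le.2 ⟨by linarith [(hψ_mem y).1, (hψ_mem y).2], (hψ_mem y).2⟩) u₀
  have hu_nonneg := ge_of_hasDerivWithinAt_lapN (c := 0)
    (fun y z _ hz => hψ_left z hz ▸ (hψ_mem y).1) hu (hu₀ ▸ fun i => (h0 i).1)
  have hu_le := le_of_hasDerivWithinAt_lapN (c := M)
    (fun y z _ hz => hψ_right z hz ▸ (hψ_mem y).2) hu (hu₀ ▸ fun i => (h0 i).2)
  refine ⟨u, hu₀, fun t ht => ?_⟩
  have hφψ : (fun i => φ (u t i)) = fun i => ψ (u t i) := funext fun i =>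
    (hψ_eq _ ⟨hu_nonneg t ht i, hu_le t ht i⟩).symm
  exact hφψ ▸ hu t ht

/-- global existence and uniqueness on `[0,∞)` for the grid system
`u' = Δ_N(φ∘u)` with initial data in the invariant box `[0,M]^{N+1}`. -/
theorem stmt8 (M : ℝ) (hM : 0 < M) (φ : ℝ → ℝ) (hφ : LocallyLipschitz φ)
    (hφ0 : φ 0 = 0) (hφpos : ∀ y ∈ Set.Icc (0 : ℝ) M, 0 ≤ φ y)
    (hφmax : ∀ y ∈ Set.Icc (0 : ℝ) M, φ y ≤ φ M)
    (N : ℕ) (hN : 1 ≤ N) (u₀ : Fin (N + 1) → ℝ)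
    (h0 : ∀ i, 0 ≤ u₀ i ∧ u₀ i ≤ M) :
    (∃ u : ℝ → Fin (N + 1) → ℝ, u 0 = u₀ ∧
      ∀ t ∈ Set.Ici (0 : ℝ),
        HasDerivWithinAt u (lapN N fun i => φ (u t i)) (Set.Ici 0) t) ∧
    ∀ u v : ℝ → Fin (N + 1) → ℝ,
      u 0 = u₀ →
      (∀ t ∈ Set.Ici (0 : ℝ),
        HasDerivWithinAt u (lapN N fun i => φ (u t i)) (Set.Ici 0) t) →
      v 0 = u₀ →
      (∀ t ∈ Set.Ici (0 : ℝ),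
        HasDerivWithinAt v (lapN N fun i => φ (v t i)) (Set.Ici 0) t) →
      ∀ t ∈ Set.Ici (0 : ℝ), u t = v t :=
  stmt8_general M hM φ hφ hφ0 hφpos hφmax N u₀ h0
end

section
/- Entropy identity: let φ, g : ℝ → ℝ be continuous, let G(s) = ∫₀^s g(φ(τ)) dτ, let N ≥ 2, and let u : I → ℝ^{N+1} solve the grid system u'(t) = Δ_N(φ∘u(t)) on an interval I. Then for every t ∈ I and every interior index 1 ≤ i ≤ N−1, the function t ↦ G(u_i(t)) is differentiable and d/dt G(u_i(t)) = D⁻( g(φ(u(t)))·D⁺(φ(u(t))) )_i − (D⁻φ(u(t)))_i · (D⁻ g(φ(u(t))))_i, where for w : {0,…,N} → ℝ we write (D⁺w)_i = (w_{i+1} − w_i)/ε, (D⁻w)_i = (w_i − w_{i−1})/ε, and (D⁻(v·D⁺w))_i = ( v_i (D⁺w)_i − v_{i−1}(D⁺w)_{i−1} )/ε. -/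
theorem lapN_of_ne_zero_of_ne (N : ℕ) (w : Fin (N + 1) → ℝ) (i : Fin (N + 1))
    (h0 : i.val ≠ 0) (hN : i.val ≠ N) :
    lapN N w i = (N : ℝ) ^ 2 *
      (w ⟨i.val + 1, by omega⟩ - 2 * w i + w ⟨i.val - 1, by omega⟩) := by
  rw [lapN, if_neg h0, dif_neg hN]

theorem discrete_product_rule {R : Type*} [CommRing R] (n v₀ v₁ w₀ w₁ w₂ : R) :
    n * (v₁ * (n * (w₂ - w₁)) - v₀ * (n * (w₁ - w₀))) - n * (w₁ - w₀) * (n * (v₁ - v₀)) =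
      v₁ * (n ^ 2 * (w₂ - 2 * w₁ + w₀)) := by
  ring

theorem HasDerivWithinAt.integral_comp {h f : ℝ → ℝ} {f' t : ℝ} {s : Set ℝ}
    (hh : Continuous h) (hf : HasDerivWithinAt f f' s t) :
    HasDerivWithinAt (fun x => ∫ τ in (0 : ℝ)..f x, h τ) (h (f t) * f') s t :=
  (intervalIntegral.integral_hasDerivAt_right (hh.intervalIntegrable _ _)
    (hh.stronglyMeasurableAtFilter _ _) hh.continuousAt).comp_hasDerivWithinAt t hf

/-- the discrete entropy identity. For `G(s) = ∫₀^s g(φ(τ)) dτ`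
and a solution `u` of the grid system, at every interior index `1 ≤ i ≤ N−1`,
`d/dt G(uᵢ(t)) = D⁻(g(φ(u))·D⁺(φ(u)))ᵢ − (D⁻φ(u))ᵢ·(D⁻g(φ(u)))ᵢ`,
with `(D⁺w)ᵢ = (w_{i+1} − wᵢ)/ε`, `(D⁻w)ᵢ = (wᵢ − w_{i−1})/ε`, `1/ε = N`. -/
theorem stmt9 (φ g : ℝ → ℝ) (hφ : Continuous φ) (hg : Continuous g)
    (N : ℕ) (I : Set ℝ)
    (u : ℝ → Fin (N + 1) → ℝ)
    (hu : ∀ t ∈ I, HasDerivWithinAt u (lapN N fun j => φ (u t j)) I t)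
    (i : ℕ) (hi1 : 1 ≤ i) (hi2 : i ≤ N - 1) (t : ℝ) (ht : t ∈ I) :
    HasDerivWithinAt (fun s => ∫ τ in (0 : ℝ)..(u s ⟨i, by omega⟩), g (φ τ))
      ((N : ℝ) * (g (φ (u t ⟨i, by omega⟩)) *
            ((N : ℝ) * (φ (u t ⟨i + 1, by omega⟩) - φ (u t ⟨i, by omega⟩))) -
          g (φ (u t ⟨i - 1, by omega⟩)) *
            ((N : ℝ) * (φ (u t ⟨i, by omega⟩) - φ (u t ⟨i - 1, by omega⟩)))) -
        ((N : ℝ) * (φ (u t ⟨i, by omega⟩) - φ (u t ⟨i - 1, by omega⟩))) *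
          ((N : ℝ) * (g (φ (u t ⟨i, by omega⟩)) - g (φ (u t ⟨i - 1, by omega⟩)))))
      I t := by
  have hcoord := hasDerivWithinAt_pi.mp (hu t ht) ⟨i, by omega⟩
  rw [lapN_of_ne_zero_of_ne _ _ _ (Nat.one_le_iff_ne_zero.mp hi1) (by dsimp only; omega)] at hcoord
  rw [discrete_product_rule]
  exact hcoord.integral_comp (hg.comp hφ)
end

section
/- Lyapunov functional: let φ : ℝ → ℝ be continuous, V(s) = ∫₀^s φ(τ) dτ, and L(w) = Σ_{i=0}^{N} V(w_i) for w : {0,…,N} → ℝ. If u : I → ℝ^{N+1} solves the grid system u'(t) = Δ_N(φ∘u(t)) on an interval I, then for every t ∈ I the function t ↦ L(u(t)) is differentiable with d/dt L(u(t)) = −(1/ε²) Σ_{i=0}^{N−1} ( φ(u_{i+1}(t)) − φ(u_i(t)) )² ≤ 0; in particular L is nonincreasing along every solution. -/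
theorem Fin.sum_mul_sub_prev_by_parts {N : ℕ} (a : Fin (N + 1) → ℝ) (g : ℕ → ℝ) (hg : g N = 0) :
    ∑ i : Fin (N + 1), a i * (g i - if (i : ℕ) = 0 then 0 else g (i - 1)) =
      -∑ i : Fin N, (a i.succ - a i.castSucc) * g i := by
  simp only [mul_sub, Finset.sum_sub_distrib]
  rw [Fin.sum_univ_castSucc, Fin.sum_univ_succ]
  simp [hg, sub_mul]

/-- The flux `a (k+1) - a k` across edge `k`, extended by `0` past the last edge: the Neumann
boundary condition. -/
def neumannFlux {N : ℕ} (a : Fin (N + 1) → ℝ) (k : ℕ) : ℝ :=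
  if h : k < N then a (Fin.succ ⟨k, h⟩) - a (Fin.castSucc ⟨k, h⟩) else 0

theorem lapN_eq_neumannFlux {N : ℕ} (a : Fin (N + 1) → ℝ) (i : Fin (N + 1)) :
    lapN N a i = (N : ℝ) ^ 2 *
      (neumannFlux a i - if (i : ℕ) = 0 then 0 else neumannFlux a (i - 1)) := by
  obtain ⟨i, hi⟩ := i
  rcases Nat.eq_zero_or_pos i with rfl | hi0
  · rcases Nat.eq_zero_or_pos N with rfl | hN
    · simp [lapN, neumannFlux]
    · simp [lapN, neumannFlux, hN, Nat.one_le_iff_ne_zero.mpr hN.ne']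
  rcases (Nat.lt_succ_iff.mp hi).eq_or_lt with rfl | hiN
  · simp [lapN, neumannFlux, hi0.ne', Nat.sub_add_cancel hi0, hi0]
  · have hi1 : i - 1 < N := (Nat.sub_le i 1).trans_lt hiN
    rw [lapN, if_neg hi0.ne', dif_neg hiN.ne, if_neg hi0.ne']
    congr 1
    simp [neumannFlux, hiN, hi1, Nat.sub_add_cancel hi0]
    ring

theorem sum_mul_lapN_self {N : ℕ} (a : Fin (N + 1) → ℝ) :
    ∑ i, a i * lapN N a i = -(N : ℝ) ^ 2 * ∑ i : Fin N, (a i.succ - a i.castSucc) ^ 2 := by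
  have hflux : neumannFlux a N = 0 := by simp [neumannFlux]
  simp_rw [lapN_eq_neumannFlux, mul_left_comm _ ((N : ℝ) ^ 2), ← Finset.mul_sum,
    Fin.sum_mul_sub_prev_by_parts a _ hflux]
  simp [neumannFlux, sq]

section Lyapunov

variable {φ V : ℝ → ℝ} {N : ℕ} {I : Set ℝ} {u : ℝ → Fin (N + 1) → ℝ}

theorem hasDerivWithinAt_sum_comp_of_lapN (hV : ∀ y, HasDerivAt V (φ y) y) {t : ℝ}
    (hu : HasDerivWithinAt u (lapN N fun j => φ (u t j)) I t) :
    HasDerivWithinAt (fun s => ∑ i, V (u s i))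
      (-(N : ℝ) ^ 2 * ∑ i : Fin N, (φ (u t i.succ) - φ (u t i.castSucc)) ^ 2) I t := by
  rw [← sum_mul_lapN_self fun j => φ (u t j)]
  exact HasDerivWithinAt.fun_sum fun i _ =>
    (hV (u t i)).comp_hasDerivWithinAt t (hasDerivWithinAt_pi.mp hu i)

theorem neg_sq_mul_sum_sq_nonpos (f : Fin N → ℝ) : -(N : ℝ) ^ 2 * ∑ i, f i ^ 2 ≤ 0 :=
  mul_nonpos_of_nonpos_of_nonneg (neg_nonpos.mpr (sq_nonneg _))
    (Finset.sum_nonneg fun _ _ => sq_nonneg _)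

theorem antitoneOn_sum_comp_of_lapN (hV : ∀ y, HasDerivAt V (φ y) y) (hI : I.OrdConnected)
    (hu : ∀ t ∈ I, HasDerivWithinAt u (lapN N fun j => φ (u t j)) I t) :
    AntitoneOn (fun s => ∑ i, V (u s i)) I := by
  have hL := fun t ht => hasDerivWithinAt_sum_comp_of_lapN hV (hu t ht)
  exact antitoneOn_of_hasDerivWithinAt_nonpos hI.convex (fun t ht => (hL t ht).continuousWithinAt)
    (fun t ht => (hL t (interior_subset ht)).mono interior_subset)
    (fun t _ => neg_sq_mul_sum_sq_nonpos _)

end Lyapunov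

theorem stmt10_general (φ : ℝ → ℝ) (hφ : Continuous φ) (N : ℕ)
    (I : Set ℝ) (hI : I.OrdConnected) (u : ℝ → Fin (N + 1) → ℝ)
    (hu : ∀ t ∈ I, HasDerivWithinAt u (lapN N fun j => φ (u t j)) I t) :
    (∀ t ∈ I,
      HasDerivWithinAt (fun s => ∑ i, ∫ τ in (0 : ℝ)..(u s i), φ τ)
        (-(N : ℝ) ^ 2 * ∑ i : Fin N, (φ (u t i.succ) - φ (u t i.castSucc)) ^ 2)
        I t ∧
      -(N : ℝ) ^ 2 * ∑ i : Fin N, (φ (u t i.succ) - φ (u t i.castSucc)) ^ 2 ≤ 0) ∧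
    ∀ t₁ ∈ I, ∀ t₂ ∈ I, t₁ ≤ t₂ →
      (∑ i, ∫ τ in (0 : ℝ)..(u t₂ i), φ τ) ≤ ∑ i, ∫ τ in (0 : ℝ)..(u t₁ i), φ τ := by
  have hV : ∀ y, HasDerivAt (fun s => ∫ τ in (0 : ℝ)..s, φ τ) (φ y) y := fun y =>
    (hφ.integral_hasStrictDerivAt 0 y).hasDerivAt
  exact ⟨fun t ht => ⟨hasDerivWithinAt_sum_comp_of_lapN hV (hu t ht), neg_sq_mul_sum_sq_nonpos _⟩,
    fun t₁ ht₁ t₂ ht₂ h => antitoneOn_sum_comp_of_lapN hV hI hu ht₁ ht₂ h⟩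

/-- `L(w) = Σᵢ V(wᵢ)` with `V(s) = ∫₀^s φ(τ) dτ` is a Lyapunov
functional for the grid system: along every solution,
`d/dt L(u(t)) = −(1/ε²) Σ_{i=0}^{N−1} (φ(u_{i+1}(t)) − φ(uᵢ(t)))² ≤ 0`,
and `L` is nonincreasing along the solution. -/
theorem stmt10 (φ : ℝ → ℝ) (hφ : Continuous φ) (N : ℕ) (hN : 1 ≤ N)
    (I : Set ℝ) (hI : I.OrdConnected) (u : ℝ → Fin (N + 1) → ℝ)
    (hu : ∀ t ∈ I, HasDerivWithinAt u (lapN N fun j => φ (u t j)) I t) :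
    (∀ t ∈ I,
      HasDerivWithinAt (fun s => ∑ i, ∫ τ in (0 : ℝ)..(u s i), φ τ)
        (-(N : ℝ) ^ 2 * ∑ i : Fin N, (φ (u t i.succ) - φ (u t i.castSucc)) ^ 2)
        I t ∧
      -(N : ℝ) ^ 2 * ∑ i : Fin N, (φ (u t i.succ) - φ (u t i.castSucc)) ^ 2 ≤ 0) ∧
    ∀ t₁ ∈ I, ∀ t₂ ∈ I, t₁ ≤ t₂ →
      (∑ i, ∫ τ in (0 : ℝ)..(u t₂ i), φ τ) ≤ ∑ i, ∫ τ in (0 : ℝ)..(u t₁ i), φ τ :=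
  stmt10_general φ hφ N I hI u hu
end

section
/- Energy dissipation: let φ : ℝ → ℝ be continuous, V(s) = ∫₀^s φ(τ) dτ, L(w) = Σ_{i=0}^{N} V(w_i), and let u : [0,∞) → ℝ^{N+1} be a global solution of the grid system u'(t) = Δ_N(φ∘u(t)). Then for all 0 ≤ t₁ ≤ t₂, ∫_{t₁}^{t₂} Σ_{i=0}^{N−1} ( φ(u_{i+1}(t)) − φ(u_i(t)) )² dt = ε² ( L(u(t₁)) − L(u(t₂)) ); in particular this integral is bounded by ε²(L(u(0)) − inf_{t≥0} L(u(t))) uniformly in t₂. -/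
open Finset Set

lemma sum_range_mul_secondDiff (W : ℕ → ℝ) (n : ℕ) :
    ∑ i ∈ range (n + 1), W i * (W (i + 1) - 2 * W i + W (i - 1)) =
      W n * (W (n + 1) - W n) - ∑ i ∈ range n, (W (i + 1) - W i) ^ 2 := by
  induction n with
  | zero => rw [sum_range_one, sum_range_zero, Nat.zero_sub]; ring
  | succ n ih =>
    rw [sum_range_succ, ih, sum_range_succ, Nat.add_sub_cancel]
    ring

def clampExt {N : ℕ} (w : Fin (N + 1) → ℝ) (n : ℕ) : ℝ := w ⟨min n N, by omega⟩

lemma clampExt_of_le {N : ℕ} (w : Fin (N + 1) → ℝ) {n : ℕ} (hn : n ≤ N) :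
    clampExt w n = w ⟨n, by omega⟩ := by
  simp [clampExt, Nat.min_eq_left hn]

lemma clampExt_of_ge {N : ℕ} (w : Fin (N + 1) → ℝ) {n : ℕ} (hn : N ≤ n) :
    clampExt w n = w ⟨N, by omega⟩ := by
  simp [clampExt, Nat.min_eq_right hn]

lemma clampExt_val {N : ℕ} (w : Fin (N + 1) → ℝ) (i : Fin (N + 1)) : clampExt w i = w i :=
  clampExt_of_le w (Nat.le_of_lt_succ i.isLt)

-- Extending `w` by constants past `N` (and using `0 - 1 = 0` in `ℕ`) encodes the Neumann boundary
-- conditions, so all three cases of `lapN` become the interior second difference.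
lemma lapN_eq_clampExt (N : ℕ) (w : Fin (N + 1) → ℝ) (i : Fin (N + 1)) :
    lapN N w i = N ^ 2 * (clampExt w (i + 1) - 2 * clampExt w i + clampExt w (i - 1)) := by
  unfold lapN
  split_ifs with h0 hN
  · rw [h0, clampExt_of_le w N.zero_le, clampExt]
    ring
  · obtain rfl : i = Fin.last N := Fin.ext hN
    rw [Fin.val_last, clampExt_of_ge w (N.le_add_right 1), clampExt_of_ge w le_rfl,
      clampExt_of_le w (N.sub_le 1)]
    ring
  · rw [clampExt_of_le w (by omega : (i : ℕ) + 1 ≤ N), clampExt_val,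
      clampExt_of_le w (by omega : (i : ℕ) - 1 ≤ N)]

def dirichletSum {N : ℕ} (w : Fin (N + 1) → ℝ) : ℝ := ∑ i : Fin N, (w i.succ - w i.castSucc) ^ 2

lemma sum_mul_lapN (N : ℕ) (w : Fin (N + 1) → ℝ) :
    ∑ i, w i * lapN N w i = -(N : ℝ) ^ 2 * dirichletSum w := by
  have hW := sum_range_mul_secondDiff (clampExt w) N
  have hend : clampExt w (N + 1) = clampExt w N := by
    rw [clampExt_of_ge w le_rfl, clampExt_of_ge w (Nat.le_succ N)]
  simp only [lapN_eq_clampExt, dirichletSum, ← clampExt_val w, Fin.val_succ, Fin.val_castSucc]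
  rw [Fin.sum_univ_eq_sum_range (fun i => clampExt w i *
      (N ^ 2 * (clampExt w (i + 1) - 2 * clampExt w i + clampExt w (i - 1)))),
    Fin.sum_univ_eq_sum_range (fun i => (clampExt w (i + 1) - clampExt w i) ^ 2)]
  simp_rw [mul_left_comm _ ((N : ℝ) ^ 2), ← mul_sum]
  rw [hW, hend]
  ring

lemma intervalIntegral.integral_eq_sub_of_hasDerivWithinAt_Ici {E : Type*}
    [NormedAddCommGroup E] [NormedSpace ℝ E] [CompleteSpace E] {F f : ℝ → E} {a t₁ t₂ : ℝ}
    (hF : ∀ t ∈ Ici a, HasDerivWithinAt F (f t) (Ici a) t) (hf : ContinuousOn f (Ici a))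
    (h₁ : a ≤ t₁) (h₁₂ : t₁ ≤ t₂) : ∫ t in t₁..t₂, f t = F t₂ - F t₁ := by
  have hsub : Icc t₁ t₂ ⊆ Ici a := fun x hx => h₁.trans hx.1
  refine integral_eq_sub_of_hasDeriv_right_of_le h₁₂
    (fun x hx => (hF x (hsub hx)).continuousWithinAt.mono hsub)
    (fun x hx => (hF x (hsub (Ioo_subset_Icc_self hx))).mono
      (Ioi_subset_Ici (h₁.trans hx.1.le)))
    ((hf.mono hsub).intervalIntegrable_of_Icc h₁₂)

noncomputable def gridEnergy (φ : ℝ → ℝ) {ι : Type*} [Fintype ι] (w : ι → ℝ) : ℝ :=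
  ∑ i, ∫ τ in (0 : ℝ)..w i, φ τ

lemma HasDerivWithinAt.gridEnergy {φ : ℝ → ℝ} (hφ : Continuous φ) {ι : Type*} [Fintype ι]
    {u : ℝ → ι → ℝ} {u' : ι → ℝ} {s : Set ℝ} {t : ℝ} (hu : HasDerivWithinAt u u' s t) :
    HasDerivWithinAt (fun r => gridEnergy φ (u r)) (∑ i, φ (u t i) * u' i) s t :=
  HasDerivWithinAt.fun_sum fun i _ =>
    (hφ.integral_hasStrictDerivAt 0 (u t i)).hasDerivAt.comp_hasDerivWithinAt (h := (u · i)) t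
      (hasDerivWithinAt_pi.mp hu i)

theorem gridEnergy_sub_eq_integral_dirichletSum {φ : ℝ → ℝ} {N : ℕ} {u : ℝ → Fin (N + 1) → ℝ}
    (hφ : Continuous φ)
    (hu : ∀ t ∈ Ici (0 : ℝ), HasDerivWithinAt u (lapN N fun j => φ (u t j)) (Ici 0) t)
    {t₁ t₂ : ℝ} (h₁ : 0 ≤ t₁) (h₁₂ : t₁ ≤ t₂) :
    gridEnergy φ (u t₂) - gridEnergy φ (u t₁) =
      -(N : ℝ) ^ 2 * ∫ t in t₁..t₂, dirichletSum fun j => φ (u t j) := by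
  have hE : ∀ t ∈ Ici (0 : ℝ), HasDerivWithinAt (fun r => gridEnergy φ (u r))
      (-(N : ℝ) ^ 2 * dirichletSum fun j => φ (u t j)) (Ici 0) t := fun t ht => by
    simpa only [sum_mul_lapN] using (hu t ht).gridEnergy hφ
  have hcont : ContinuousOn u (Ici 0) := fun t ht => (hu t ht).continuousWithinAt
  have hD : ContinuousOn (fun t => -(N : ℝ) ^ 2 * dirichletSum fun j => φ (u t j)) (Ici 0) := by
    unfold dirichletSum
    fun_prop
  rw [← intervalIntegral.integral_const_mul,
    intervalIntegral.integral_eq_sub_of_hasDerivWithinAt_Ici hE hD h₁ h₁₂]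

/-- energy dissipation. With `V(s) = ∫₀^s φ(τ) dτ`,
`L(w) = Σᵢ V(wᵢ)` and a global solution `u` of the grid system, for all
`0 ≤ t₁ ≤ t₂`,
`∫_{t₁}^{t₂} Σ_{i=0}^{N−1} (φ(u_{i+1}(t)) − φ(uᵢ(t)))² dt = ε²(L(u(t₁)) − L(u(t₂)))`
(`ε² = 1/N²`); in particular the integral is bounded by
`ε²(L(u(0)) − inf_{t ≥ 0} L(u(t)))`, uniformly in `t₂` (the infimum being
expressed through an arbitrary lower bound `m` of `{L(u(t)) : t ≥ 0}`). -/
theorem stmt11 (φ : ℝ → ℝ) (hφ : Continuous φ) (N : ℕ) (hN : 1 ≤ N)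
    (u : ℝ → Fin (N + 1) → ℝ)
    (hu : ∀ t ∈ Set.Ici (0 : ℝ),
      HasDerivWithinAt u (lapN N fun j => φ (u t j)) (Set.Ici 0) t) :
    (∀ t₁ t₂ : ℝ, 0 ≤ t₁ → t₁ ≤ t₂ →
      (∫ t in t₁..t₂, ∑ i : Fin N, (φ (u t i.succ) - φ (u t i.castSucc)) ^ 2) =
        (1 / (N : ℝ) ^ 2) *
          ((∑ i, ∫ τ in (0 : ℝ)..(u t₁ i), φ τ) -
            ∑ i, ∫ τ in (0 : ℝ)..(u t₂ i), φ τ)) ∧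
    ∀ m : ℝ, (∀ t : ℝ, 0 ≤ t → m ≤ ∑ i, ∫ τ in (0 : ℝ)..(u t i), φ τ) →
      ∀ t₂ : ℝ, 0 ≤ t₂ →
        (∫ t in (0 : ℝ)..t₂,
            ∑ i : Fin N, (φ (u t i.succ) - φ (u t i.castSucc)) ^ 2) ≤
          (1 / (N : ℝ) ^ 2) * ((∑ i, ∫ τ in (0 : ℝ)..(u 0 i), φ τ) - m) := by
  have hN₀ : (N : ℝ) ^ 2 ≠ 0 := by positivity
  have hdiss : ∀ t₁ t₂ : ℝ, 0 ≤ t₁ → t₁ ≤ t₂ →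
      (∫ t in t₁..t₂, dirichletSum fun j => φ (u t j)) =
        1 / (N : ℝ) ^ 2 * (gridEnergy φ (u t₁) - gridEnergy φ (u t₂)) := by
    intro t₁ t₂ h₁ h₁₂
    rw [← neg_sub, gridEnergy_sub_eq_integral_dirichletSum hφ hu h₁ h₁₂]
    field_simp
  exact ⟨hdiss, fun m hm t₂ ht₂ => (hdiss 0 t₂ le_rfl ht₂).trans_le <|
    mul_le_mul_of_nonneg_left (sub_le_sub_left (hm t₂ ht₂) _) (by positivity)⟩
end

section
/- A steady state with at least two components in the spinodal interval is not a local minimum of the Lyapunov functional: let φ : ℝ → ℝ be continuous, differentiable at a point ω₂ with φ'(ω₂) < 0; let V(s) = ∫₀^s φ(τ) dτ and L(w) = Σ_{i=0}^{N} V(w_i). Let p : {0,…,N} → ℝ and let i₁ ≠ i₂ be two indices with p_{i₁} = p_{i₂} = ω₂. Then p is not a local minimum of L restricted to the mass hyperplane {w : Σ_{i=0}^{N} w_i = Σ_{i=0}^{N} p_i}: for every δ > 0 there exists w with Σ_i w_i = Σ_i p_i, ‖w − p‖_∞ < δ, and L(w) < L(p). -/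
/-- a steady state with (at least) two components equal to a
spinodal value `ω₂` (where `φ'(ω₂) < 0`) is not a local minimum of the Lyapunov
functional `L(w) = Σᵢ V(wᵢ)`, `V(s) = ∫₀^s φ(τ) dτ`, restricted to the mass
hyperplane `{w : Σᵢ wᵢ = Σᵢ pᵢ}`. -/
theorem stmt13 (φ : ℝ → ℝ) (hφ : Continuous φ) (ω₂ d : ℝ)
    (hd : HasDerivAt φ d ω₂) (hdneg : d < 0) (N : ℕ)
    (p : Fin (N + 1) → ℝ) (i₁ i₂ : Fin (N + 1)) (hne : i₁ ≠ i₂)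
    (h1 : p i₁ = ω₂) (h2 : p i₂ = ω₂) :
    ∀ δ > (0 : ℝ), ∃ w : Fin (N + 1) → ℝ,
      (∑ i, w i = ∑ i, p i) ∧ (∀ i, |w i - p i| < δ) ∧
      (∑ i, ∫ τ in (0 : ℝ)..(w i), φ τ) < ∑ i, ∫ τ in (0 : ℝ)..(p i), φ τ := by
  intro δ hδ
  have hlo := (hasDerivAt_iff_isLittleO.mp hd).def (by linarith : (0:ℝ) < -d/2)
  rw [Metric.eventually_nhds_iff] at hlo
  obtain ⟨ε, hε, hball⟩ := hlo
  have hmin : 0 < min δ ε := lt_min hδ hε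
  set q : ℝ := min δ ε / 2 with hqdef
  have hq0 : 0 < q := by positivity
  have hqδ : q < δ := by
    have : min δ ε ≤ δ := min_le_left _ _
    simp only [hqdef]; linarith
  have hqε : q < ε := by
    have : min δ ε ≤ ε := min_le_right _ _
    simp only [hqdef]; linarith
  have key : ∀ s ∈ Set.Icc (0:ℝ) q, φ (ω₂ + s) - φ (ω₂ - s) ≤ d * s := by
    intro s hs
    obtain ⟨hs0, hsq⟩ := hs
    have hsε : s < ε := lt_of_le_of_lt hsq hqε
    have h1' := hball (y := ω₂ + s)
      (by rw [Real.dist_eq]; rw [show ω₂ + s - ω₂ = s by ring, abs_of_nonneg hs0]; exact hsε)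
    have h2' := hball (y := ω₂ - s)
      (by rw [Real.dist_eq]; rw [show ω₂ - s - ω₂ = -s by ring, abs_neg, abs_of_nonneg hs0]; exact hsε)
    simp only [Real.norm_eq_abs, smul_eq_mul, show ω₂ + s - ω₂ = s by ring,
      show ω₂ - s - ω₂ = -s by ring, abs_neg, abs_of_nonneg hs0] at h1' h2'
    have a1 := abs_le.mp h1'
    have a2 := abs_le.mp h2'
    obtain ⟨a1l, a1r⟩ := a1
    obtain ⟨a2l, a2r⟩ := a2
    nlinarith
  -- change of variables
  have e1 : (∫ s in (0:ℝ)..q, φ (ω₂ + s)) = ∫ τ in ω₂..(ω₂+q), φ τ := by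
    simpa using intervalIntegral.integral_comp_add_left (a := (0:ℝ)) (b := q) φ ω₂
  have e2 : (∫ s in (0:ℝ)..q, φ (ω₂ - s)) = ∫ τ in (ω₂-q)..ω₂, φ τ := by
    simpa using intervalIntegral.integral_comp_sub_left (a := (0:ℝ)) (b := q) φ ω₂
  have int1 : IntervalIntegrable (fun s => φ (ω₂ + s)) MeasureTheory.volume 0 q :=
    (hφ.comp (continuous_const.add continuous_id)).intervalIntegrable _ _
  have int2 : IntervalIntegrable (fun s => φ (ω₂ - s)) MeasureTheory.volume 0 q :=
    (hφ.comp (continuous_const.sub continuous_id)).intervalIntegrable _ _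
  have hint : (∫ τ in ω₂..(ω₂+q), φ τ) + (∫ τ in ω₂..(ω₂-q), φ τ) < 0 := by
    have e3 : (∫ τ in ω₂..(ω₂-q), φ τ) = -(∫ τ in (ω₂-q)..ω₂, φ τ) :=
      (intervalIntegral.integral_symm _ _)
    rw [e3, ← e1, ← e2, ← sub_eq_add_neg, ← intervalIntegral.integral_sub int1 int2]
    have mono : (∫ s in (0:ℝ)..q, (φ (ω₂ + s) - φ (ω₂ - s))) ≤ ∫ s in (0:ℝ)..q, d * s := by
      apply intervalIntegral.integral_mono_on hq0.le (int1.sub int2)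
        ((continuous_const.mul continuous_id).intervalIntegrable _ _)
      exact key
    have : (∫ s in (0:ℝ)..q, d * s) = d * (q^2/2) := by
      rw [intervalIntegral.integral_const_mul, integral_id]
      ring
    have hlt : d * (q^2/2) < 0 := mul_neg_of_neg_of_pos hdneg (by positivity)
    linarith
  -- the witness
  refine ⟨fun i => p i + ((if i = i₁ then q else 0) + (if i = i₂ then -q else 0)), ?_, ?_, ?_⟩
  · rw [Finset.sum_add_distrib, Finset.sum_add_distrib]
    simp [Finset.sum_ite_eq']
  · intro i
    dsimp only
    by_cases hi1 : i = i₁ <;> by_cases hi2 : i = i₂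
    · exact absurd (hi1 ▸ hi2) hne
    · subst hi1
      rw [if_pos rfl, if_neg hne,
        show p i + (q + 0) - p i = q by ring, abs_of_nonneg hq0.le]; exact hqδ
    · subst hi2
      rw [if_neg (show ¬ i = i₁ from fun h => hne h.symm), if_pos rfl,
        show p i + (0 + -q) - p i = -q by ring, abs_neg, abs_of_nonneg hq0.le]; exact hqδ
    · rw [if_neg hi1, if_neg hi2,
        show p i + (0 + 0) - p i = 0 by ring, abs_zero]; exact hδ
  · have hV : ∀ i, (∫ τ in (0:ℝ)..(p i + ((if i = i₁ then q else 0) + (if i = i₂ then -q else 0))), φ τ)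
        = (∫ τ in (0:ℝ)..(p i), φ τ)
          + ((if i = i₁ then (∫ τ in ω₂..(ω₂+q), φ τ) else 0)
            + (if i = i₂ then (∫ τ in ω₂..(ω₂-q), φ τ) else 0)) := by
      intro i
      by_cases hi1 : i = i₁ <;> by_cases hi2 : i = i₂
      · exact absurd (hi1 ▸ hi2) hne
      · subst hi1
        simp only [if_pos rfl, if_neg hne, add_zero, h1]
        exact (intervalIntegral.integral_add_adjacent_intervals
          (hφ.intervalIntegrable 0 ω₂) (hφ.intervalIntegrable ω₂ (ω₂ + q))).symm
      · subst hi2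
        simp only [if_pos rfl, if_true, if_neg (show ¬ i = i₁ from fun h => hne h.symm), zero_add, h2]
        rw [show ω₂ + -q = ω₂ - q by ring]
        exact (intervalIntegral.integral_add_adjacent_intervals
          (hφ.intervalIntegrable 0 ω₂) (hφ.intervalIntegrable ω₂ (ω₂ - q))).symm
      · simp [hi1, hi2]
    calc (∑ i, ∫ τ in (0:ℝ)..(p i + ((if i = i₁ then q else 0) + (if i = i₂ then -q else 0))), φ τ)
        = ∑ i, ((∫ τ in (0:ℝ)..(p i), φ τ)
          + ((if i = i₁ then (∫ τ in ω₂..(ω₂+q), φ τ) else 0)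
            + (if i = i₂ then (∫ τ in ω₂..(ω₂-q), φ τ) else 0))) :=
          Finset.sum_congr rfl (fun i _ => hV i)
      _ = (∑ i, ∫ τ in (0:ℝ)..(p i), φ τ)
          + ((∫ τ in ω₂..(ω₂+q), φ τ) + (∫ τ in ω₂..(ω₂-q), φ τ)) := by
          rw [Finset.sum_add_distrib, Finset.sum_add_distrib]
          simp [Finset.sum_ite_eq']
      _ < ∑ i, ∫ τ in (0:ℝ)..(p i), φ τ := by linarith
end

section
/- Closed form of the stability recursion: let a, b ∈ ℝ and let (d_j)_{j≥0} be a real sequence with d₀ = b and d_j = a for 1 ≤ j ≤ n₁. Define X₁ = −(d₀ + d₁) and, recursively, X_{i+1} = −d_{i+1} X_i + (−1)^{i+1} ∏_{j=0}^{i} d_j. Then for every 1 ≤ i ≤ n₁ one has X_i = (−1)^i a^{i−1} ( a + i·b ). In particular, if a > 0 then the condition (−1)^i X_i > 0 for all 1 ≤ i ≤ n₁ is equivalent to a + i·b > 0 for all 1 ≤ i ≤ n₁, i.e. to |b| < a/n₁ when b < 0. -/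
/-- closed form of the stability recursion. If `d₀ = b`,
`d_j = a` for `1 ≤ j ≤ n₁`, `X₁ = −(d₀ + d₁)` and
`X_{i+1} = −d_{i+1} X_i + (−1)^{i+1} ∏_{j=0}^{i} d_j`, then
`X_i = (−1)^i a^{i−1}(a + i·b)` for `1 ≤ i ≤ n₁`; in particular, for `a > 0`,
`(−1)^i X_i > 0` for all `1 ≤ i ≤ n₁` iff `a + i·b > 0` for all `1 ≤ i ≤ n₁`,
i.e. (when `b < 0` and `n₁ ≥ 1`) iff `|b| < a/n₁`. -/
theorem stmt14 (a b : ℝ) (n₁ : ℕ) (d : ℕ → ℝ) (hd0 : d 0 = b)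
    (hda : ∀ j : ℕ, 1 ≤ j → j ≤ n₁ → d j = a) (X : ℕ → ℝ)
    (hX1 : X 1 = -(d 0 + d 1))
    (hXrec : ∀ i : ℕ, 1 ≤ i →
      X (i + 1) = -d (i + 1) * X i +
        (-1 : ℝ) ^ (i + 1) * ∏ j ∈ Finset.range (i + 1), d j) :
    (∀ i : ℕ, 1 ≤ i → i ≤ n₁ →
      X i = (-1 : ℝ) ^ i * a ^ (i - 1) * (a + (i : ℝ) * b)) ∧
    (0 < a →
      ((∀ i : ℕ, 1 ≤ i → i ≤ n₁ → 0 < (-1 : ℝ) ^ i * X i) ↔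
        ∀ i : ℕ, 1 ≤ i → i ≤ n₁ → 0 < a + (i : ℝ) * b) ∧
      (b < 0 → 1 ≤ n₁ →
        ((∀ i : ℕ, 1 ≤ i → i ≤ n₁ → 0 < (-1 : ℝ) ^ i * X i) ↔
          |b| < a / (n₁ : ℝ)))) := by
  have hprod : ∀ i : ℕ, 1 ≤ i → i ≤ n₁ →
      ∏ j ∈ Finset.range (i + 1), d j = b * a ^ i := by
    intro i h1 h2
    rw [Finset.prod_range_succ']
    rw [hd0, mul_comm]
    congr 1
    rw [Finset.prod_congr rfl (fun j hj => hda (j + 1) (by omega)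
      (by have := Finset.mem_range.mp hj; omega))]
    simp
  have hcf : ∀ i : ℕ, 1 ≤ i → i ≤ n₁ →
      X i = (-1 : ℝ) ^ i * a ^ (i - 1) * (a + (i : ℝ) * b) := by
    intro i
    induction i with
    | zero => intro h; omega
    | succ k ih =>
      intro h1 h2
      rcases Nat.lt_or_ge k 1 with hk | hk
      · have hk0 : k = 0 := by omega
        subst hk0
        rw [hX1, hd0, hda 1 le_rfl h2]
        norm_num
        ring
      · obtain ⟨m, rfl⟩ : ∃ m, k = m + 1 := ⟨k - 1, by omega⟩
        rw [hXrec (m + 1) hk, ih hk (by omega), hprod (m + 1) hk (by omega),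
          hda (m + 2) (by omega) h2]
        push_cast
        ring
  refine ⟨hcf, fun ha => ?_⟩
  have key : ∀ i : ℕ, 1 ≤ i → i ≤ n₁ →
      ((0 < (-1 : ℝ) ^ i * X i) ↔ 0 < a + (i : ℝ) * b) := by
    intro i h1 h2
    have hp : (0 : ℝ) < a ^ (i - 1) := pow_pos ha _
    have hone : ((-1 : ℝ) ^ i) * ((-1 : ℝ) ^ i) = 1 := by
      rw [← pow_add, ← two_mul, pow_mul]; norm_num
    rw [hcf i h1 h2, show (-1 : ℝ) ^ i * ((-1 : ℝ) ^ i * a ^ (i - 1) * (a + (i : ℝ) * b))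
        = a ^ (i - 1) * (a + (i : ℝ) * b) from by
      rw [← mul_assoc, ← mul_assoc, hone, one_mul]]
    exact ⟨fun h => by nlinarith, fun h => mul_pos hp h⟩
  have hiff1 : (∀ i : ℕ, 1 ≤ i → i ≤ n₁ → 0 < (-1 : ℝ) ^ i * X i) ↔
      (∀ i : ℕ, 1 ≤ i → i ≤ n₁ → 0 < a + (i : ℝ) * b) :=
    ⟨fun h i h1 h2 => (key i h1 h2).mp (h i h1 h2),
     fun h i h1 h2 => (key i h1 h2).mpr (h i h1 h2)⟩
  refine ⟨hiff1, fun hb hn => ?_⟩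
  rw [hiff1]
  have hn' : (0 : ℝ) < (n₁ : ℝ) := by exact_mod_cast hn
  constructor
  · intro h
    have := h n₁ hn le_rfl
    rw [abs_of_neg hb, lt_div_iff₀ hn']
    linarith
  · intro h i h1 h2
    rw [abs_of_neg hb, lt_div_iff₀ hn'] at h
    have hi : (i : ℝ) ≤ (n₁ : ℝ) := by exact_mod_cast h2
    nlinarith
end
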